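/- arXiv:2408.12699 — 3 statements merged into one kernel-verified Lean document; each statement's English description precedes it below -/
import Mathlib

section
/- Let V be a finite type and let Δ be a finite multidigraph on V given by a nonempty multiset E of directed edges. Suppose Δ is connected, i.e. every two distinct vertices of V are joined by a walk in which each edge of E may be traversed in either direction. Then Δ is circuit-Eulerian if and only if both (i) Δ is strongly connected, and (ii) τ(x) = η(x) for every vertex x ∈ V. -/
/-- A directed walk from `x` to `y` in the multidigraph with edge multiset `E`:
a nonempty list of edges, each an element of `E`, consecutively linked
(head of each edge equals tail of the next), starting at `x` and ending at `y`. -/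
def IsDiwalk {V : Type*} (E : Multiset (V × V)) (x y : V) (L : List (V × V)) : Prop :=
  L ≠ [] ∧ (∀ e ∈ L, e ∈ E) ∧ L.Chain' (fun e f => e.2 = f.1) ∧
    L.head?.map Prod.fst = some x ∧ L.getLast?.map Prod.snd = some y

/-- An Eulerian dicircuit: a directed trail from some vertex back to itself whose
multiset of entries equals the full edge multiset. -/
def CircuitEulerian {V : Type*} (E : Multiset (V × V)) : Prop :=
  ∃ (v : V) (L : List (V × V)), IsDiwalk E v v L ∧ (L : Multiset (V × V)) = E

/-- An Eulerian dipath: a directed trail between two distinct vertices whose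
multiset of entries equals the full edge multiset. -/
def PathEulerian {V : Type*} (E : Multiset (V × V)) : Prop :=
  ∃ (x y : V), x ≠ y ∧ ∃ L : List (V × V), IsDiwalk E x y L ∧ (L : Multiset (V × V)) = E

/-- Strong connectedness: between every two distinct vertices there are directed
walks both ways. -/
def StronglyConnected {V : Type*} (E : Multiset (V × V)) : Prop :=
  ∀ x y : V, x ≠ y → (∃ L, IsDiwalk E x y L) ∧ (∃ L, IsDiwalk E y x L)

/-- Connectedness: every two distinct vertices are joined by a walk in which each
edge of `E` may be traversed in either direction. -/
def UndirConnected {V : Type*} (E : Multiset (V × V)) : Prop :=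
  ∀ x y : V, x ≠ y → Relation.ReflTransGen (fun a b => (a, b) ∈ E ∨ (b, a) ∈ E) x y

/-- Out-degree: the number of edges (with multiplicity) whose tailpoint is `x`. -/
def outDeg {V : Type*} [DecidableEq V] (E : Multiset (V × V)) (x : V) : ℕ :=
  Multiset.countP (fun e => e.1 = x) E

/-- In-degree: the number of edges (with multiplicity) whose headpoint is `x`. -/
def inDeg {V : Type*} [DecidableEq V] (E : Multiset (V × V)) (x : V) : ℕ :=
  Multiset.countP (fun e => e.2 = x) E

/-! Counting edges along a walk shows that a closed walk leaves every vertex as often as it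
enters it; this gives the balance of an Eulerian dicircuit, and its strong connectivity follows
because connectedness puts every vertex on the circuit.

Conversely, in a balanced multidigraph a trail that has not returned to its start can always be
continued along an unused edge, so closed trails exist. If a closed trail misses some edge,
connectedness produces an unused edge leaving a vertex of the trail; the unused edges are again
balanced, so a closed trail through that edge can be spliced in. Hence a longest closed trail is
Eulerian. -/

section Walks

variable {V : Type*} {E F : Multiset (V × V)} {x y z : V} {e : V × V} {L L₁ L₂ D : List (V × V)}

theorem isDiwalk_cons_iff :
    IsDiwalk E x y (e :: L) ↔ e ∈ E ∧ e.1 = x ∧ (L = [] ∧ e.2 = y ∨ IsDiwalk E e.2 y L) := by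
  cases L with
  | nil => simp [IsDiwalk, List.Chain']
  | cons f L =>
    simp only [IsDiwalk, List.Chain', List.isChain_cons_cons, List.forall_mem_cons,
      List.head?_cons, List.getLast?_cons_cons, Option.map_some, Option.some.injEq]
    grind

@[simp]
theorem not_isDiwalk_nil : ¬IsDiwalk E x y [] := fun h => h.1 rfl

theorem isDiwalk_append_iff (h₁ : L₁ ≠ []) (h₂ : L₂ ≠ []) :
    IsDiwalk E x z (L₁ ++ L₂) ↔ ∃ y, IsDiwalk E x y L₁ ∧ IsDiwalk E y z L₂ := by
  induction L₁ generalizing x with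
  | nil => exact absurd rfl h₁
  | cons f t ih =>
    rcases eq_or_ne t [] with rfl | ht
    · simp [isDiwalk_cons_iff, h₂, and_assoc]
    · simp [isDiwalk_cons_iff, ht, ih ht, and_assoc]

theorem IsDiwalk.append (h₁ : IsDiwalk E x y L₁) (h₂ : IsDiwalk E y z L₂) :
    IsDiwalk E x z (L₁ ++ L₂) :=
  (isDiwalk_append_iff h₁.1 h₂.1).2 ⟨y, h₁, h₂⟩

theorem IsDiwalk.mono (h : IsDiwalk E x y L) (hEF : E ≤ F) : IsDiwalk F x y L :=
  ⟨h.1, fun e he => Multiset.mem_of_le hEF (h.2.1 e he), h.2.2⟩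

theorem isDiwalk_singleton (he : e ∈ E) : IsDiwalk E e.1 e.2 [e] := by
  simp [isDiwalk_cons_iff, he]

theorem IsDiwalk.splice (h : IsDiwalk E x z (L₁ ++ e :: L₂)) (hD : IsDiwalk E e.1 e.1 D) :
    IsDiwalk E x z (L₁ ++ (D ++ e :: L₂)) := by
  rcases eq_or_ne L₁ [] with rfl | h₁
  · obtain ⟨-, rfl, -⟩ := isDiwalk_cons_iff.1 h
    exact hD.append h
  · obtain ⟨y, hx, hz⟩ := (isDiwalk_append_iff h₁ (List.cons_ne_nil _ _)).1 h
    obtain ⟨-, rfl, -⟩ := isDiwalk_cons_iff.1 hz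
    exact hx.append (hD.append hz)

theorem IsDiwalk.exists_isDiwalk_fst_of_mem (h : IsDiwalk E x y L) (he : e ∈ L) :
    ∃ W, IsDiwalk E e.1 y W := by
  induction L generalizing x with
  | nil => simp at he
  | cons f t ih =>
    obtain ⟨-, rfl, ht⟩ := isDiwalk_cons_iff.1 h
    rcases List.mem_cons.1 he with rfl | he
    · exact ⟨_, h⟩
    · rcases ht with ⟨rfl, -⟩ | ht
      · simp at he
      · exact ih ht he

theorem IsDiwalk.exists_isDiwalk_snd_of_mem (h : IsDiwalk E x y L) (he : e ∈ L) :
    ∃ W, IsDiwalk E x e.2 W := by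
  induction L generalizing x with
  | nil => simp at he
  | cons f t ih =>
    obtain ⟨hf, rfl, ht⟩ := isDiwalk_cons_iff.1 h
    rcases List.mem_cons.1 he with rfl | he
    · exact ⟨_, isDiwalk_singleton hf⟩
    · rcases ht with ⟨rfl, -⟩ | ht
      · simp at he
      · obtain ⟨W, hW⟩ := ih ht he
        exact ⟨_, (isDiwalk_singleton hf).append hW⟩

theorem Relation.ReflTransGen.exists_boundary {α : Type*} {r : α → α → Prop} {p : α → Prop}
    {a b : α} (h : Relation.ReflTransGen r a b) (ha : p a) (hb : ¬p b) :
    ∃ c d, p c ∧ ¬p d ∧ r c d := by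
  induction h with
  | refl => exact absurd ha hb
  | @tail c d _ hcd ih =>
    by_cases hc : p c
    · exact ⟨c, d, hc, hb, hcd⟩
    · exact ih hc

theorem UndirConnected.exists_mem_of_ne (hconn : UndirConnected E) (hxy : x ≠ y) :
    ∃ e ∈ E, e.1 = x ∨ e.2 = x := by
  rcases (hconn x y hxy).cases_head with rfl | ⟨c, hc | hc, -⟩
  · exact absurd rfl hxy
  · exact ⟨_, hc, Or.inl rfl⟩
  · exact ⟨_, hc, Or.inr rfl⟩

section Balanced

variable [DecidableEq V]

def IsBalanced (E : Multiset (V × V)) : Prop :=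
  ∀ x, outDeg E x = inDeg E x

theorem outDeg_cons (a : V) : outDeg (e ::ₘ E) a = outDeg E a + if e.1 = a then 1 else 0 :=
  Multiset.countP_cons _ _ _

theorem inDeg_cons (a : V) : inDeg (e ::ₘ E) a = inDeg E a + if e.2 = a then 1 else 0 :=
  Multiset.countP_cons _ _ _

theorem IsDiwalk.outDeg_add_ite (h : IsDiwalk E x y L) (a : V) :
    outDeg (L : Multiset (V × V)) a + (if y = a then 1 else 0) =
      inDeg (L : Multiset (V × V)) a + if x = a then 1 else 0 := by
  induction L generalizing x with
  | nil => simp at h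
  | cons f t ih =>
    obtain ⟨-, rfl, ht⟩ := isDiwalk_cons_iff.1 h
    rw [← Multiset.cons_coe, outDeg_cons, inDeg_cons]
    rcases ht with ⟨rfl, rfl⟩ | ht
    · simp only [Multiset.coe_nil, outDeg, inDeg, Multiset.countP_zero]
      omega
    · have := ih ht
      omega

theorem IsDiwalk.isBalanced (h : IsDiwalk E x x L) : IsBalanced (L : Multiset (V × V)) :=
  fun a => Nat.add_right_cancel (h.outDeg_add_ite a)

theorem IsBalanced.tsub (hE : IsBalanced E) (hF : IsBalanced F) (h : F ≤ E) :
    IsBalanced (E - F) := fun a => by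
  simp only [outDeg, inDeg, Multiset.countP_sub h]
  rw [← outDeg, ← outDeg, ← inDeg, ← inDeg, hE, hF]

theorem IsBalanced.exists_fst_eq_iff (hE : IsBalanced E) (x : V) :
    (∃ e ∈ E, e.1 = x) ↔ ∃ e ∈ E, e.2 = x := by
  rw [← Multiset.countP_pos, ← Multiset.countP_pos]
  exact iff_of_eq (congrArg _ (hE x))

theorem IsBalanced.exists_mem_tsub_fst_eq (hE : IsBalanced E) (h : IsDiwalk E x y L)
    (hL : (L : Multiset (V × V)) ≤ E) (hxy : x ≠ y) :
    ∃ e ∈ E - (L : Multiset (V × V)), e.1 = y := by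
  have hwalk := h.outDeg_add_ite y
  rw [if_pos rfl, if_neg hxy] at hwalk
  have hin : inDeg (L : Multiset (V × V)) y ≤ inDeg E y := Multiset.countP_le_of_le _ hL
  have hout : outDeg (E - (L : Multiset (V × V))) y =
      outDeg E y - outDeg (L : Multiset (V × V)) y :=
    Multiset.countP_sub hL _
  rw [← Multiset.countP_pos]
  change 0 < outDeg _ y
  have := hE y
  omega

theorem IsBalanced.exists_closed_trail_of_trail {y : V} {L : List (V × V)} (hE : IsBalanced E)
    (h : IsDiwalk E x y L) (hL : (L : Multiset (V × V)) ≤ E) :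
    ∃ C, IsDiwalk E x x C ∧ (C : Multiset (V × V)) ≤ E := by
  by_cases hxy : x = y
  · exact ⟨L, hxy ▸ h, hL⟩
  obtain ⟨e, he, rfl⟩ := hE.exists_mem_tsub_fst_eq h hL hxy
  have hLe : ((L ++ [e] : List (V × V)) : Multiset (V × V)) ≤ E := by
    rw [← Multiset.coe_add, Multiset.coe_singleton, add_comm]
    exact (le_tsub_iff_right hL).1 (Multiset.singleton_le.2 he)
  have hcard := Multiset.card_le_card hLe
  exact exists_closed_trail_of_trail hE
    (h.append (isDiwalk_singleton (Multiset.mem_of_le (Multiset.sub_le_self _ _) he))) hLe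
termination_by Multiset.card E - L.length
decreasing_by
  simp only [Multiset.coe_card, List.length_append, List.length_singleton] at hcard ⊢
  omega

theorem IsBalanced.exists_mem_tsub_fst_eq_of_closed (hE : IsBalanced E) (hconn : UndirConnected E)
    (h : IsDiwalk E x x L) (hL : (L : Multiset (V × V)) ≤ E) (hne : (L : Multiset (V × V)) ≠ E) :
    ∃ e ∈ L, ∃ g ∈ E - (L : Multiset (V × V)), g.1 = e.1 := by
  set S : V → Prop := fun v => ∃ e ∈ L, e.1 = v
  have hLbal := h.isBalanced
  have hSsnd : ∀ e ∈ L, S e.2 := fun e he => by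
    obtain ⟨g, hg, hge⟩ := (hLbal.exists_fst_eq_iff e.2).2 ⟨e, Multiset.mem_coe.2 he, rfl⟩
    exact ⟨g, Multiset.mem_coe.1 hg, hge⟩
  have hmem : ∀ g ∈ E, g ∉ L → g ∈ E - (L : Multiset (V × V)) := fun g hg hgL => by
    rw [Multiset.mem_sub, Multiset.count_eq_zero_of_notMem (Multiset.mem_coe.not.2 hgL)]
    exact Multiset.count_pos.2 hg
  suffices ∃ g ∈ E - (L : Multiset (V × V)), S g.1 ∨ S g.2 by
    obtain ⟨g, hg, ⟨e, he, hge⟩ | ⟨e, he, hge⟩⟩ := this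
    · exact ⟨e, he, g, hg, hge.symm⟩
    · obtain ⟨g', hg', hg'g⟩ := ((hE.tsub hLbal hL).exists_fst_eq_iff _).2 ⟨g, hg, rfl⟩
      exact ⟨e, he, g', hg', hg'g.trans hge.symm⟩
  obtain ⟨f, hf⟩ := Multiset.exists_mem_of_ne_zero
    (fun h0 => hne (le_antisymm hL (tsub_eq_zero_iff_le.1 h0)))
  by_cases hf1 : S f.1
  · exact ⟨f, hf, Or.inl hf1⟩
  have hSx : S x := by
    obtain ⟨e, t, rfl⟩ := List.exists_cons_of_ne_nil h.1
    exact ⟨e, List.mem_cons_self, (isDiwalk_cons_iff.1 h).2.1⟩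
  obtain ⟨b, c, hb, hc, hbc | hcb⟩ :=
    (hconn x f.1 (fun hx => hf1 (hx ▸ hSx))).exists_boundary hSx hf1
  · exact ⟨(b, c), hmem _ hbc (fun hL => hc (hSsnd _ hL)), Or.inl hb⟩
  · exact ⟨(c, b), hmem _ hcb (fun hL => hc ⟨_, hL, rfl⟩), Or.inr hb⟩

theorem IsBalanced.exists_longer_closed_trail (hE : IsBalanced E) (hconn : UndirConnected E)
    (h : IsDiwalk E x x L) (hL : (L : Multiset (V × V)) ≤ E) (hne : (L : Multiset (V × V)) ≠ E) :
    ∃ L', IsDiwalk E x x L' ∧ (L' : Multiset (V × V)) ≤ E ∧ L.length < L'.length := by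
  obtain ⟨e, he, g, hg, hge⟩ := hE.exists_mem_tsub_fst_eq_of_closed hconn h hL hne
  obtain ⟨D, hD, hDle⟩ := (hE.tsub h.isBalanced hL).exists_closed_trail_of_trail
    (isDiwalk_singleton hg) (by simpa using hg)
  obtain ⟨L₁, L₂, rfl⟩ := List.append_of_mem he
  refine ⟨L₁ ++ (D ++ e :: L₂), h.splice (hge ▸ hD.mono (Multiset.sub_le_self _ _)), ?_, ?_⟩
  · calc ((L₁ ++ (D ++ e :: L₂) : List (V × V)) : Multiset (V × V))
        = D + (L₁ ++ e :: L₂ : List (V × V)) := by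
          simp only [← Multiset.coe_add]
          abel
      _ ≤ (E - (L₁ ++ e :: L₂ : List (V × V))) + (L₁ ++ e :: L₂ : List (V × V)) := by gcongr
      _ = E := tsub_add_cancel_of_le hL
  · simpa using List.length_pos_iff.2 hD.1

theorem IsBalanced.exists_circuit_of_closed_trail {L : List (V × V)} (hE : IsBalanced E)
    (hconn : UndirConnected E) (h : IsDiwalk E x x L) (hL : (L : Multiset (V × V)) ≤ E) :
    ∃ C, IsDiwalk E x x C ∧ (C : Multiset (V × V)) = E := by
  by_cases hne : (L : Multiset (V × V)) = E
  · exact ⟨L, h, hne⟩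
  obtain ⟨L', h', hL', hlt⟩ := hE.exists_longer_closed_trail hconn h hL hne
  have hcard := Multiset.card_le_card hL'
  exact exists_circuit_of_closed_trail hE hconn h' hL'
termination_by Multiset.card E - L.length
decreasing_by
  simp only [Multiset.coe_card] at hcard
  omega

theorem circuitEulerian_of_isBalanced (hne : E ≠ 0) (hconn : UndirConnected E)
    (hE : IsBalanced E) : CircuitEulerian E := by
  obtain ⟨e, he⟩ := Multiset.exists_mem_of_ne_zero hne
  obtain ⟨C, hC, hCle⟩ :=
    hE.exists_closed_trail_of_trail (isDiwalk_singleton he) (by simpa using he)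
  obtain ⟨C', hC', hC'E⟩ := hE.exists_circuit_of_closed_trail hconn hC hCle
  exact ⟨_, _, hC', hC'E⟩

theorem CircuitEulerian.isBalanced (h : CircuitEulerian E) : IsBalanced E := by
  obtain ⟨v, L, hL, rfl⟩ := h
  exact hL.isBalanced

end Balanced

theorem CircuitEulerian.stronglyConnected (h : CircuitEulerian E) (hconn : UndirConnected E) :
    StronglyConnected E := by
  classical
  obtain ⟨v, L, hL, rfl⟩ := h
  have hbal := hL.isBalanced
  have hreach : ∀ x y, x ≠ y → (∃ W, IsDiwalk (L : Multiset (V × V)) x v W) ∧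
      ∃ W, IsDiwalk (L : Multiset (V × V)) v x W := by
    intro x y hxy
    obtain ⟨e₁, he₁, rfl⟩ : ∃ e ∈ (L : Multiset (V × V)), e.1 = x := by
      obtain ⟨e, he, hx | hx⟩ := hconn.exists_mem_of_ne hxy
      · exact ⟨e, he, hx⟩
      · exact (hbal.exists_fst_eq_iff x).2 ⟨e, he, hx⟩
    obtain ⟨e₂, he₂, h₂⟩ := (hbal.exists_fst_eq_iff _).1 ⟨e₁, he₁, rfl⟩
    exact ⟨hL.exists_isDiwalk_fst_of_mem he₁, h₂ ▸ hL.exists_isDiwalk_snd_of_mem he₂⟩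
  intro x y hxy
  obtain ⟨⟨W₁, h₁⟩, ⟨W₂, h₂⟩⟩ := hreach x y hxy
  obtain ⟨⟨W₃, h₃⟩, ⟨W₄, h₄⟩⟩ := hreach y x hxy.symm
  exact ⟨⟨_, h₁.append h₄⟩, ⟨_, h₃.append h₂⟩⟩

end Walks

theorem circuitEulerian_iff_stronglyConnected_and_balanced_general
    {V : Type*} [DecidableEq V] (E : Multiset (V × V))
    (hne : E ≠ 0) (hconn : UndirConnected E) :
    CircuitEulerian E ↔
      StronglyConnected E ∧ ∀ x : V, outDeg E x = inDeg E x :=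
  ⟨fun h => ⟨h.stronglyConnected hconn, h.isBalanced⟩,
    fun ⟨_, hE⟩ => circuitEulerian_of_isBalanced hne hconn hE⟩

/-- **Theorem 5 (Euler's theorem for multidigraphs).**
A finite, connected, nontrivial multidigraph is circuit-Eulerian if and only if
it is strongly connected and out-degree equals in-degree at every vertex. -/
theorem circuitEulerian_iff_stronglyConnected_and_balanced
    {V : Type*} [Fintype V] [DecidableEq V] (E : Multiset (V × V))
    (hne : E ≠ 0) (hconn : UndirConnected E) :
    CircuitEulerian E ↔
      StronglyConnected E ∧ ∀ x : V, outDeg E x = inDeg E x :=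
  circuitEulerian_iff_stronglyConnected_and_balanced_general E hne hconn
end

section
/- Let V be a finite type and let E be a nonempty multiset of directed edges on V which is symmetric, i.e. for all vertices a, b the multiplicity of (a,b) in E equals the multiplicity of (b,a) in E (so E is the two-way multidigraph engendered by an undirected multigraph). If the resulting multidigraph is connected, then it is circuit-Eulerian. -/
/-! A symmetric edge multiset is balanced: at every vertex there are as many outgoing as incoming
edges. In a balanced multidigraph a longest trail is closed, since at the end of an open trail an
unused outgoing edge is left to extend it. If the multidigraph is moreover connected, a longest
trail uses every edge: otherwise an unused edge meets the trail at some vertex, and the closed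
trail, rotated to start there, can absorb that edge. -/

theorem Relation.ReflTransGen.exists_boundary_rel {α : Type*} {r : α → α → Prop} {p : α → Prop}
    {a b : α} (h : Relation.ReflTransGen r a b) (ha : ¬ p a) (hb : p b) :
    ∃ x y, r x y ∧ ¬ p x ∧ p y := by
  induction h with
  | refl => exact absurd hb ha
  | @tail c d _ hcd ih =>
    by_cases hc : p c
    · exact ih hc
    · exact ⟨c, d, hcd, hc, hb⟩

section Walks

variable {V : Type*}

theorem List.IsChain.map_fst_append_getLast {L : List (V × V)}
    (h : L.IsChain (fun e f => e.2 = f.1)) :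
    L.map Prod.fst ++ (L.getLast?.map Prod.snd).toList
      = (L.head?.map Prod.fst).toList ++ L.map Prod.snd := by
  induction h with
  | nil => rfl
  | singleton a => rfl
  | @cons_cons a b l hab _ ih =>
    simp only [List.map_cons, List.getLast?_cons_cons, List.head?_cons, Option.map_some,
      Option.toList_some, List.cons_append, List.nil_append] at ih ⊢
    rw [ih, hab]

theorem List.IsChain.map_fst_eq_map_snd_of_closed {L : List (V × V)}
    (h : L.IsChain (fun e f => e.2 = f.1))
    (hclosed : L.head?.map Prod.fst = L.getLast?.map Prod.snd) :
    (L : Multiset (V × V)).map Prod.fst = (L : Multiset (V × V)).map Prod.snd := by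
  have := congrArg ((↑) : List V → Multiset V) h.map_fst_append_getLast
  rw [hclosed] at this
  simp only [← Multiset.coe_add, Multiset.map_coe] at this ⊢
  rwa [add_comm, add_left_cancel_iff] at this

theorem cycleChain_coe_iff {L : List (V × V)} :
    (L : Cycle (V × V)).Chain (fun e f => e.2 = f.1) ↔
      L.IsChain (fun e f => e.2 = f.1) ∧ L.head?.map Prod.fst = L.getLast?.map Prod.snd := by
  cases L with
  | nil => simp
  | cons a l =>
    rw [Cycle.chain_coe_cons, ← List.cons_append, List.isChain_append,
      List.getLast?_eq_some_getLast (List.cons_ne_nil a l)]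
    simp [eq_comm]

theorem List.IsChain.exists_isChain_coe_eq_cons_of_closed {L : List (V × V)}
    (h : L.IsChain (fun e f => e.2 = f.1))
    (hclosed : L.head?.map Prod.fst = L.getLast?.map Prod.snd)
    {f g : V × V} (hg : g ∈ L) (hfg : f.1 = g.1 ∨ f.2 = g.1) :
    ∃ C : List (V × V), C.IsChain (fun e f => e.2 = f.1) ∧ (C : Multiset (V × V)) = f ::ₘ L := by
  obtain ⟨A, B, rfl⟩ := List.append_of_mem hg
  have hperm : (g :: (B ++ A)).Perm (A ++ g :: B) :=
    List.perm_append_comm (l₁ := g :: B)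
  obtain ⟨hrot, hrotclosed⟩ : (g :: (B ++ A)).IsChain (fun e f => e.2 = f.1) ∧
      (g :: (B ++ A)).head?.map Prod.fst = (g :: (B ++ A)).getLast?.map Prod.snd := by
    rw [← cycleChain_coe_iff, ← List.cons_append,
      Cycle.coe_eq_coe.2 (List.isRotated_append (l := g :: B) (l' := A))]
    exact cycleChain_coe_iff.2 ⟨h, hclosed⟩
  rcases hfg with hf | hf
  · refine ⟨g :: (B ++ A) ++ [f], hrot.append (.singleton f) ?_, ?_⟩
    · intro x hx y hy
      rw [hx, List.head?_cons] at hrotclosed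
      simp only [Option.map_some, Option.some.injEq] at hrotclosed
      simp only [List.head?_cons, Option.mem_def, Option.some.injEq] at hy
      rw [← hy, hf, hrotclosed]
    · exact Multiset.coe_eq_coe.2 ((List.perm_append_singleton f _).trans (hperm.cons f))
  · exact ⟨f :: g :: (B ++ A), hrot.cons_cons hf, Multiset.coe_eq_coe.2 (hperm.cons f)⟩

def IsTrail (E : Multiset (V × V)) (L : List (V × V)) : Prop :=
  L.IsChain (fun e f => e.2 = f.1) ∧ (L : Multiset (V × V)) ≤ E

theorem exists_longest_trail (E : Multiset (V × V)) :
    ∃ L, IsTrail E L ∧ ∀ L', IsTrail E L' → L'.length ≤ L.length := by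
  have hbdd : BddAbove {n | ∃ L, IsTrail E L ∧ L.length = n} := by
    refine ⟨Multiset.card E, ?_⟩
    rintro _ ⟨L, hL, rfl⟩
    simpa using Multiset.card_le_card hL.2
  have hne : {n | ∃ L, IsTrail E L ∧ L.length = n}.Nonempty := ⟨0, [], ⟨.nil, by simp⟩, rfl⟩
  obtain ⟨L, hL, hlen⟩ := Nat.sSup_mem hne hbdd
  exact ⟨L, hL, fun L' hL' => hlen ▸ le_csSup hbdd ⟨L', hL', rfl⟩⟩

end Walks

section Trails

variable {V : Type*} [DecidableEq V] {E : Multiset (V × V)} {L : List (V × V)}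

theorem IsTrail.exists_mem_sub_linked_of_not_closed (hbal : E.map Prod.fst = E.map Prod.snd)
    (hL : IsTrail E L) (hopen : L.head?.map Prod.fst ≠ L.getLast?.map Prod.snd) :
    ∃ f ∈ E - L, ∀ l ∈ L.getLast?, l.2 = f.1 := by
  obtain ⟨l, hl⟩ : ∃ l, L.getLast? = some l := by
    cases L with
    | nil => exact absurd rfl hopen
    | cons a t => exact ⟨_, List.getLast?_eq_some_getLast (List.cons_ne_nil a t)⟩
  have hwalk := congrArg ((↑) : List V → Multiset V) hL.1.map_fst_append_getLast
  rw [hl, ← Multiset.coe_add, ← Multiset.coe_add, ← Multiset.map_coe, ← Multiset.map_coe] at hwalk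
  rw [← add_tsub_cancel_of_le hL.2, Multiset.map_add, Multiset.map_add] at hbal
  -- tails and heads of the unused edges balance, except at the two ends of the trail
  have hrest : (L.head?.map Prod.fst).toList + (E - L).map Prod.fst
      = (E - L).map Prod.snd + {l.2} := by
    ext v
    have h₁ := congrArg (Multiset.count v) hwalk
    have h₂ := congrArg (Multiset.count v) hbal
    simp only [Multiset.count_add, Option.map_some, Option.toList_some, Multiset.coe_singleton,
      Multiset.count_singleton] at h₁ h₂ ⊢
    omega
  have hmem : l.2 ∈ (E - L).map Prod.fst := by
    have : l.2 ∈ (L.head?.map Prod.fst).toList + (E - L).map Prod.fst := by simp [hrest]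
    refine (Multiset.mem_add.1 this).resolve_left fun h => hopen ?_
    simp_all
  obtain ⟨f, hf, hfl⟩ := Multiset.mem_map.1 hmem
  exact ⟨f, hf, by simp [hl, hfl]⟩

theorem exists_mem_sub_incident_of_undirConnected (hconn : UndirConnected E)
    (hLE : (L : Multiset (V × V)) ≤ E)
    (hbalL : (L : Multiset (V × V)).map Prod.fst = (L : Multiset (V × V)).map Prod.snd)
    (hLne : L ≠ []) (hcover : (L : Multiset (V × V)) ≠ E) :
    ∃ f ∈ E - L, ∃ g ∈ L, f.1 = g.1 ∨ f.2 = g.1 := by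
  have mem_sub : ∀ f ∈ E, f ∉ L → f ∈ E - L := fun f hf hfL =>
    Multiset.mem_sub.2 (by rw [Multiset.count_eq_zero.2 hfL]; exact Multiset.count_pos.2 hf)
  obtain ⟨e, he⟩ := Multiset.exists_mem_of_ne_zero
    fun h => hcover (le_antisymm hLE (tsub_eq_zero_iff_le.1 h))
  by_cases he₁ : e.1 ∈ L.map Prod.fst
  · obtain ⟨g, hg, hge⟩ := List.mem_map.1 he₁
    exact ⟨e, he, g, hg, .inl hge.symm⟩
  obtain ⟨g, hg⟩ := List.exists_mem_of_ne_nil L hLne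
  have hg₁ : g.1 ∈ L.map Prod.fst := List.mem_map_of_mem hg
  have hne : e.1 ≠ g.1 := fun h => he₁ (h ▸ hg₁)
  obtain ⟨x, y, hxy, hx, hy⟩ := (hconn _ _ hne).exists_boundary_rel he₁ hg₁
  obtain ⟨g', hg', hg'y⟩ := List.mem_map.1 hy
  rcases hxy with hxy | hyx
  · exact ⟨(x, y), mem_sub _ hxy fun h => hx (List.mem_map_of_mem (f := Prod.fst) h), g', hg',
      .inr hg'y.symm⟩
  · -- `x` is not a tail of `L`, hence not a head either, as `L` is balanced
    have hxL : x ∉ L.map Prod.snd := by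
      rwa [← Multiset.mem_coe, ← Multiset.map_coe, ← hbalL, Multiset.map_coe, Multiset.mem_coe]
    exact ⟨(y, x), mem_sub _ hyx fun h => hxL (List.mem_map_of_mem (f := Prod.snd) h), g', hg',
      .inl hg'y.symm⟩

theorem circuitEulerian_of_map_fst_eq_map_snd (hne : E ≠ 0)
    (hbal : E.map Prod.fst = E.map Prod.snd) (hconn : UndirConnected E) :
    CircuitEulerian E := by
  obtain ⟨L, hL, hmax⟩ := exists_longest_trail E
  obtain ⟨e, he⟩ := Multiset.exists_mem_of_ne_zero hne
  have hLne : L ≠ [] := by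
    rintro rfl
    simpa using hmax [e] ⟨.singleton e, by simpa using he⟩
  have hgrow : ∀ f ∈ E - L, (L : Multiset (V × V)) + {f} ≤ E := fun f hf =>
    (le_tsub_iff_left hL.2).1 (Multiset.singleton_le.2 hf)
  have hclosed : L.head?.map Prod.fst = L.getLast?.map Prod.snd := by
    by_contra hopen
    obtain ⟨f, hf, hlink⟩ := hL.exists_mem_sub_linked_of_not_closed hbal hopen
    have hC : IsTrail E (L ++ [f]) :=
      ⟨hL.1.append (.singleton f) (by simpa using hlink), by
        rw [← Multiset.coe_add, Multiset.coe_singleton]; exact hgrow f hf⟩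
    simpa using hmax _ hC
  have hcover : (L : Multiset (V × V)) = E := by
    by_contra hcover
    obtain ⟨f, hf, g, hg, hfg⟩ := exists_mem_sub_incident_of_undirConnected hconn hL.2
      (hL.1.map_fst_eq_map_snd_of_closed hclosed) hLne hcover
    obtain ⟨C, hC, hCL⟩ := hL.1.exists_isChain_coe_eq_cons_of_closed hclosed hg hfg
    have hCE : (C : Multiset (V × V)) ≤ E := by
      rw [hCL, ← Multiset.singleton_add, add_comm]; exact hgrow f hf
    have hlen := congrArg Multiset.card hCL
    simp only [Multiset.coe_card, Multiset.card_cons] at hlen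
    have := hmax C ⟨hC, hCE⟩
    omega
  obtain ⟨v, hv⟩ : ∃ v, L.head?.map Prod.fst = some v := by
    cases L with
    | nil => exact absurd rfl hLne
    | cons a t => exact ⟨a.1, rfl⟩
  exact ⟨v, L, ⟨hLne, fun e he => Multiset.mem_of_le hL.2 he, hL.1, hv, hclosed ▸ hv⟩, hcover⟩

end Trails

theorem map_fst_eq_map_snd_of_count_swap {V : Type*} [DecidableEq V] {E : Multiset (V × V)}
    (hsym : ∀ a b : V, E.count (a, b) = E.count (b, a)) :
    E.map Prod.fst = E.map Prod.snd := by
  have hswap : E.map Prod.swap = E := by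
    ext ⟨a, b⟩
    rw [show ((a, b) : V × V) = Prod.swap (b, a) from rfl,
      Multiset.count_map_eq_count' _ _ Prod.swap_injective]
    exact hsym b a
  calc E.map Prod.fst = (E.map Prod.swap).map Prod.fst := by rw [hswap]
    _ = E.map Prod.snd := by rw [Multiset.map_map]; rfl

theorem twoWay_circuitEulerian_general
    {V : Type*} [DecidableEq V] (E : Multiset (V × V))
    (hne : E ≠ 0)
    (hsym : ∀ a b : V, E.count (a, b) = E.count (b, a))
    (hconn : UndirConnected E) :
    CircuitEulerian E :=
  circuitEulerian_of_map_fst_eq_map_snd hne (map_fst_eq_map_snd_of_count_swap hsym) hconn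

/-- **Proposition 3.** The two-way multidigraph engendered by a finite connected
nontrivial multigraph (i.e. a connected multidigraph with a nonempty symmetric
edge multiset) is circuit-Eulerian. -/
theorem twoWay_circuitEulerian
    {V : Type*} [Fintype V] [DecidableEq V] (E : Multiset (V × V))
    (hne : E ≠ 0)
    (hsym : ∀ a b : V, E.count (a, b) = E.count (b, a))
    (hconn : UndirConnected E) :
    CircuitEulerian E :=
  twoWay_circuitEulerian_general E hne hsym hconn
end

section
/- Let V be a finite type and let Γ be a finite multidigraph on V given by a multiset E of directed edges, and suppose τ(x) = η(x) for every vertex x ∈ V. Then for every edge (a,b) ∈ E there is a directed walk in Γ from b to a. Consequently, there is no directed edge of Γ whose tailpoint lies in one strongly connected component of Γ and whose headpoint lies in a different strongly connected component. -/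
/-- `y` is reachable from `x`: either `x = y` or there is a directed walk from
`x` to `y`. -/
def ReachableIn {V : Type*} (E : Multiset (V × V)) (x y : V) : Prop :=
  x = y ∨ ∃ L, IsDiwalk E x y L

/-! Let `S` be the set of vertices reachable from `b`. No edge leaves `S`, so every edge with
tail in `S` also has head in `S`. Balance gives as many edges with tail in `S` as with head
in `S`, hence the two classes of edges coincide and every edge entering `S` starts in `S`.
The edge `(a, b)` enters `S`, so `a` is reachable from `b`. -/

theorem Multiset.forall_mem_imp_of_countP_eq {α : Type*} {p q : α → Prop} [DecidablePred p]
    [DecidablePred q] {s : Multiset α} (hpq : ∀ a ∈ s, p a → q a)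
    (hcount : s.countP p = s.countP q) : ∀ a ∈ s, q a → p a := by
  have hle : s.filter p ≤ s.filter q :=
    calc s.filter p = s.filter (fun a => p a ∧ q a) :=
          Multiset.filter_congr fun a ha => ⟨fun hp => ⟨hp, hpq a ha hp⟩, And.left⟩
      _ ≤ s.filter q := Multiset.monotone_filter_right s fun _ => And.right
  have hfilter : s.filter p = s.filter q := Multiset.eq_of_le_of_card_le hle <| by
    rw [← Multiset.countP_eq_card_filter, ← Multiset.countP_eq_card_filter, hcount]
  intro a ha hqa
  exact (Multiset.of_mem_filter (hfilter ▸ Multiset.mem_filter_of_mem ha hqa :))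

theorem Multiset.sum_countP_eq_countP_mem {α β : Type*} [DecidableEq β] (s : Multiset α)
    (f : α → β) (S : Finset β) :
    ∑ x ∈ S, s.countP (fun a => f a = x) = s.countP (fun a => f a ∈ S) := by
  induction s using Multiset.induction with
  | empty => simp
  | cons a s ih => simp [Multiset.countP_cons, Finset.sum_add_distrib, ih]

section Diwalk

variable {V : Type*} {E : Multiset (V × V)}

theorem IsDiwalk.singleton {e : V × V} (he : e ∈ E) : IsDiwalk E e.1 e.2 [e] :=
  ⟨List.cons_ne_nil e [], by simpa, List.isChain_singleton e, rfl, rfl⟩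

theorem IsDiwalk.concat {x y : V} {L : List (V × V)} (hL : IsDiwalk E x y L) {e : V × V}
    (he : e ∈ E) (hy : e.1 = y) : IsDiwalk E x e.2 (L ++ [e]) := by
  obtain ⟨hne, hmem, hchain, hhead, hlast⟩ := hL
  refine ⟨by simp, ?_, ?_, ?_, by simp⟩
  · simpa [or_imp, forall_and, he] using hmem
  · refine List.isChain_append.2 ⟨hchain, List.isChain_singleton e, ?_⟩
    rintro f hf _ ⟨⟩
    rw [hf, Option.map_some, Option.some_inj] at hlast
    rw [hlast, hy]
  · obtain ⟨f, L, rfl⟩ := List.exists_cons_of_ne_nil hne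
    simpa using hhead

theorem ReachableIn.exists_diwalk_of_mem {x y z : V} (hxy : ReachableIn E x y)
    (hyz : (y, z) ∈ E) : ∃ L, IsDiwalk E x z L := by
  rcases hxy with rfl | ⟨L, hL⟩
  · exact ⟨_, IsDiwalk.singleton hyz⟩
  · exact ⟨_, hL.concat hyz rfl⟩

end Diwalk

section Balanced

variable {V : Type*} [DecidableEq V] {E : Multiset (V × V)}

theorem countP_fst_mem_eq_countP_snd_mem (hdeg : ∀ x, outDeg E x = inDeg E x) (S : Finset V) :
    E.countP (fun e => e.1 ∈ S) = E.countP (fun e => e.2 ∈ S) := by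
  rw [← E.sum_countP_eq_countP_mem Prod.fst, ← E.sum_countP_eq_countP_mem Prod.snd]
  exact Finset.sum_congr rfl fun x _ => hdeg x

theorem forall_fst_mem_of_forall_snd_mem (hdeg : ∀ x, outDeg E x = inDeg E x)
    {S : Finset V} (hS : ∀ e ∈ E, e.1 ∈ S → e.2 ∈ S) : ∀ e ∈ E, e.2 ∈ S → e.1 ∈ S :=
  Multiset.forall_mem_imp_of_countP_eq hS (countP_fst_mem_eq_countP_snd_mem hdeg S)

theorem exists_diwalk_of_mem_of_balanced (hdeg : ∀ x, outDeg E x = inDeg E x) {a b : V}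
    (hab : (a, b) ∈ E) : ∃ L, IsDiwalk E b a L := by
  classical
  let S := (E.map Prod.snd).toFinset.filter (ReachableIn E b)
  have hS : ∀ e ∈ E, e.1 ∈ S → e.2 ∈ S := by
    intro e he h1
    simp only [S, Finset.mem_filter, Multiset.mem_toFinset, Multiset.mem_map] at h1 ⊢
    exact ⟨⟨e, he, rfl⟩, .inr (h1.2.exists_diwalk_of_mem he)⟩
  have hbS : b ∈ S := by simpa [S] using ⟨⟨a, hab⟩, .inl rfl⟩
  have haS : a ∈ S := forall_fst_mem_of_forall_snd_mem hdeg hS (a, b) hab hbS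
  rcases (Finset.mem_filter.1 haS).2 with rfl | hwalk
  · exact ⟨_, IsDiwalk.singleton hab⟩
  · exact hwalk

end Balanced

theorem balanced_no_edge_between_components_general
    {V : Type*} [DecidableEq V] (E : Multiset (V × V))
    (hdeg : ∀ x : V, outDeg E x = inDeg E x) :
    (∀ a b : V, (a, b) ∈ E → ∃ L, IsDiwalk E b a L) ∧
      ∀ a b : V, (a, b) ∈ E → ReachableIn E a b ∧ ReachableIn E b a :=
  ⟨fun _ _ hab => exists_diwalk_of_mem_of_balanced hdeg hab,
    fun _ _ hab => ⟨.inr ⟨_, IsDiwalk.singleton hab⟩,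
      .inr (exists_diwalk_of_mem_of_balanced hdeg hab)⟩⟩

/-- **Claim in Theorem 5.** If out-degree equals in-degree at every vertex of a
finite multidigraph, then for every edge `(a, b)` there is a directed walk back
from `b` to `a`; consequently no directed edge has its tailpoint in one strongly
connected component and its headpoint in a different one (tail and head of every
edge are mutually reachable). -/
theorem balanced_no_edge_between_components
    {V : Type*} [Fintype V] [DecidableEq V] (E : Multiset (V × V))
    (hdeg : ∀ x : V, outDeg E x = inDeg E x) :
    (∀ a b : V, (a, b) ∈ E → ∃ L, IsDiwalk E b a L) ∧
      ∀ a b : V, (a, b) ∈ E → ReachableIn E a b ∧ ReachableIn E b a :=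
  balanced_no_edge_between_components_general E hdeg
end
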